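/- Let G be a finite abelian group of order b, p_b the smallest prime factor of b, s, n, d, M positive integers, and vol_{s,n}(M-1) the number of A ∈ (G^∨)^{s×n} with Dick weight μ(A) ≤ M-1. If vol_{s,n}(M-1) ≤ p_b^d, then there exists a subgroup P ⊆ G^{s×n} with |P| ≤ b^d such that every nonzero element of P^⊥ has Dick weight at least M. -/

import Mathlib

/-!
Identify a matrix `A` of characters of `G` with the character `B ↦ ∏ i j, A i j (B i j)` of
`V = G^{s×n}`; it is trivial only for `A = 1`. The kernel of a nontrivial character is a proper
subgroup, so its index is a divisor `≠ 1` of `|V| = b^{sn}`, hence at least `p = p_b`. Averaging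
over `B ∈ V`, some `B` lies in the kernels of at most a `1/p` fraction of any finite family of
nontrivial characters. Starting from the `vol_{s,n}(M-1) - 1 < p^d` nonzero matrices of small
weight and choosing `B₁, …, B_d` greedily leaves fewer than one of them vanishing on all `B_k`.
The subgroup generated by the `B_k` is killed by `b`, so it has at most `b^d` elements.
-/

open scoped Classical

/-- The Dick weight `μ(A) = ∑_{i,j} j · δ(a_{ij})` of a matrix of characters. -/
noncomputable def dickWeight {G : Type*} [AddCommGroup G] {s n : ℕ}
    (A : Fin s → Fin n → AddChar G ℂ) : ℕ :=
  ∑ i : Fin s, ∑ j : Fin n, (j.1 + 1) * (if A i j = 1 then 0 else 1)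

open Finset

namespace AddChar

section Ker

variable {V R : Type*} [AddCommGroup V] [CommMonoid R]

def ker (ψ : AddChar V R) : AddSubgroup V := ψ.toAddMonoidHom.ker

@[simp]
lemma mem_ker {ψ : AddChar V R} {x : V} : x ∈ ψ.ker ↔ ψ x = 1 := by
  simp [ker]

lemma ker_eq_top_iff {ψ : AddChar V R} : ψ.ker = ⊤ ↔ ψ = 1 := by
  simp [AddSubgroup.eq_top_iff', eq_one_iff]

end Ker

section PiProd

variable {ι R : Type*} [Fintype ι] {G : ι → Type*} [∀ i, AddCommGroup (G i)]
  [CommMonoid R]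

def piProd (ψ : ∀ i, AddChar (G i) R) : AddChar (∀ i, G i) R :=
  ∏ i, (ψ i).compAddMonoidHom (Pi.evalAddMonoidHom G i)

@[simp]
lemma piProd_apply (ψ : ∀ i, AddChar (G i) R) (x : ∀ i, G i) :
    piProd ψ x = ∏ i, ψ i (x i) := by
  simp [piProd, prod_apply]

lemma piProd_apply_single [DecidableEq ι] (ψ : ∀ i, AddChar (G i) R) (i : ι) (g : G i) :
    piProd ψ (Pi.single i g) = ψ i g := by
  rw [piProd_apply, Fintype.prod_eq_single i fun j hj => by simp [hj]]
  simp

@[simp]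
lemma piProd_eq_one_iff {ψ : ∀ i, AddChar (G i) R} : piProd ψ = 1 ↔ ψ = 1 := by
  refine ⟨fun h => funext fun i => eq_one_iff.2 fun g => ?_,
    fun h => eq_one_iff.2 fun x => by simp [h]⟩
  rw [← piProd_apply_single, h, one_apply]

end PiProd

end AddChar

namespace AddSubgroup

lemma minFac_le_index {V : Type*} [AddGroup V] [Finite V] {H : AddSubgroup V} (hH : H ≠ ⊤)
    {b m : ℕ} (hV : Nat.card V ∣ b ^ m) : b.minFac ≤ H.index := by
  have hq : H.index.minFac.Prime := Nat.minFac_prime (mt index_eq_one.mp hH)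
  have hqb : H.index.minFac ∣ b :=
    hq.dvd_of_dvd_pow ((Nat.minFac_dvd _).trans (H.index_dvd_card.trans hV))
  exact (Nat.minFac_le_of_dvd hq.two_le hqb).trans
    (Nat.minFac_le (Nat.pos_of_ne_zero index_ne_zero_of_finite))

lemma card_closure_range_le {V ι : Type*} [AddCommGroup V] [Fintype ι] {b : ℕ} [NeZero b]
    (hb : ∀ x : V, b • x = 0) (x : ι → V) :
    Nat.card (closure (Set.range x)) ≤ b ^ Fintype.card ι := by
  let _ : Module (ZMod b) V := AddCommGroup.zmodModule hb
  have hsub : (closure (Set.range x) : Set V) ⊆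
      Set.range fun c : ι → ZMod b => ∑ i, c i • x i := by
    intro y hy
    obtain ⟨a, rfl⟩ := (mem_closure_range_iff_of_fintype).mp hy
    exact ⟨fun i => a i, by simp [Int.cast_smul_eq_zsmul]⟩
  calc Nat.card (closure (Set.range x))
      ≤ Nat.card (Set.range fun c : ι → ZMod b => ∑ i, c i • x i) :=
        Nat.card_mono (Set.toFinite _) hsub
    _ ≤ Nat.card (ι → ZMod b) := Finite.card_range_le _
    _ = b ^ Fintype.card ι := by simp

end AddSubgroup

section Averaging

variable {ι V R : Type*} [AddCommGroup V] [Fintype V] [CommMonoid R]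

lemma exists_card_filter_apply_eq_one_mul_le (ψ : ι → AddChar V R) (S : Finset ι) {p : ℕ}
    (hp : ∀ a ∈ S, p ≤ (ψ a).ker.index) :
    ∃ x : V, #{a ∈ S | ψ a x = 1} * p ≤ #S := by
  obtain ⟨x, -, hx⟩ := exists_le_of_sum_le univ_nonempty <| calc
    ∑ x : V, #{a ∈ S | ψ a x = 1} * p = ∑ a ∈ S, #{x : V | ψ a x = 1} * p := by
      simp only [← sum_mul, card_filter]
      rw [sum_comm]
    _ ≤ ∑ a ∈ S, Nat.card V := sum_le_sum fun a ha => by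
      rw [← (ψ a).ker.card_mul_index, Nat.card_eq_fintype_card (α := (ψ a).ker),
        Fintype.card_subtype]
      simpa using Nat.mul_le_mul_left _ (hp a ha)
    _ = ∑ _x : V, #S := by simp [mul_comm]
  exact ⟨x, hx⟩

lemma exists_card_filter_forall_apply_eq_one_mul_pow_le (ψ : ι → AddChar V R) {p : ℕ} (d : ℕ)
    (S : Finset ι) (hp : ∀ a ∈ S, p ≤ (ψ a).ker.index) :
    ∃ x : Fin d → V, #{a ∈ S | ∀ k, ψ a (x k) = 1} * p ^ d ≤ #S := by
  induction d generalizing S with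
  | zero => exact ⟨finZeroElim, by simp⟩
  | succ d ih =>
    obtain ⟨x₀, hx₀⟩ := exists_card_filter_apply_eq_one_mul_le ψ S hp
    obtain ⟨x, hx⟩ := ih {a ∈ S | ψ a x₀ = 1} fun a ha => hp a (mem_filter.1 ha).1
    refine ⟨Fin.cons x₀ x, ?_⟩
    have hfilter : {a ∈ S | ∀ k, ψ a ((Fin.cons x₀ x : Fin (d + 1) → V) k) = 1} =
        {a ∈ {a ∈ S | ψ a x₀ = 1} | ∀ k, ψ a (x k) = 1} := by
      simp [filter_filter, Fin.forall_fin_succ]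
    calc #{a ∈ S | ∀ k, ψ a ((Fin.cons x₀ x : Fin (d + 1) → V) k) = 1} * p ^ (d + 1)
        = #{a ∈ {a ∈ S | ψ a x₀ = 1} | ∀ k, ψ a (x k) = 1} * p ^ d * p := by
          rw [hfilter, pow_succ, mul_assoc]
      _ ≤ #{a ∈ S | ψ a x₀ = 1} * p := Nat.mul_le_mul_right _ hx
      _ ≤ #S := hx₀

lemma exists_forall_mem_exists_apply_ne_one (ψ : ι → AddChar V R) {p d : ℕ} (S : Finset ι)
    (hp : ∀ a ∈ S, p ≤ (ψ a).ker.index) (hS : #S < p ^ d) :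
    ∃ x : Fin d → V, ∀ a ∈ S, ∃ k, ψ a (x k) ≠ 1 := by
  obtain ⟨x, hx⟩ := exists_card_filter_forall_apply_eq_one_mul_pow_le ψ d S hp
  refine ⟨x, fun a ha => ?_⟩
  by_contra! hkill
  have hpos : 0 < #{a ∈ S | ∀ k, ψ a (x k) = 1} := card_pos.2 ⟨a, mem_filter.2 ⟨ha, hkill⟩⟩
  exact (hx.trans_lt hS).not_ge (Nat.le_mul_of_pos_left _ hpos)

end Averaging

theorem exists_subgroup_min_dick_weight_general (G : Type*) [AddCommGroup G] [Fintype G]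
    (b s n d M : ℕ) (hb : b = Fintype.card G)
    (hvol : Nat.card {A : Fin s → Fin n → AddChar G ℂ // dickWeight A ≤ M - 1} ≤
      b.minFac ^ d) :
    ∃ P : AddSubgroup (Fin s → Fin n → G), Nat.card P ≤ b ^ d ∧
      ∀ A : Fin s → Fin n → AddChar G ℂ,
        (∀ B ∈ P, (∏ i : Fin s, ∏ j : Fin n, A i j (B i j)) = 1) →
        A ≠ (fun _ _ => 1) → M ≤ dickWeight A := by
  subst hb
  let ψ (A : Fin s → Fin n → AddChar G ℂ) := AddChar.piProd fun i => AddChar.piProd (A i)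
  let ball : Finset (Fin s → Fin n → AddChar G ℂ) := {A | dickWeight A ≤ M - 1}
  have hone : 1 ∈ ball := by simp [ball, dickWeight]
  have hS : #(ball.erase 1) < (Fintype.card G).minFac ^ d := by
    have hball : #ball ≤ (Fintype.card G).minFac ^ d := by
      simpa [ball, Nat.card_eq_fintype_card, Fintype.card_subtype] using hvol
    have := card_pos.2 ⟨_, hone⟩
    rw [card_erase_of_mem hone]
    omega
  have hp (A) (hA : A ∈ ball.erase 1) : (Fintype.card G).minFac ≤ (ψ A).ker.index := by
    refine AddSubgroup.minFac_le_index (m := n * s) ?_ (by simp [pow_mul])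
    rw [Ne, AddChar.ker_eq_top_iff, AddChar.piProd_eq_one_iff]
    exact fun h => (mem_erase.1 hA).1
      (funext fun i => AddChar.piProd_eq_one_iff.1 (congr_fun h i))
  obtain ⟨B, hB⟩ := exists_forall_mem_exists_apply_ne_one ψ _ hp hS
  refine ⟨AddSubgroup.closure (Set.range B), ?_, fun A hA hA1 => ?_⟩
  · exact (AddSubgroup.card_closure_range_le (b := Fintype.card G)
      (fun _ => by ext; simp) B).trans_eq (by simp)
  by_contra! hlt
  obtain ⟨k, hk⟩ := hB A (mem_erase.2 ⟨hA1, mem_filter.2 ⟨mem_univ _, by omega⟩⟩)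
  exact hk (by simpa [ψ] using hA (B k) (AddSubgroup.subset_closure ⟨k, rfl⟩))

/-- **Existence of subgroups with large minimum Dick weight.** If the ball
`vol_{s,n}(M-1)` of radius `M-1` for the Dick weight has at most `p_b^d` elements,
where `p_b` is the smallest prime factor of `b = |G|`, then there is a subgroup
`P ⊆ G^{s×n}` with `|P| ≤ b^d` such that every nonzero element of `P^⊥` has Dick
weight at least `M`. -/
theorem exists_subgroup_min_dick_weight (G : Type*) [AddCommGroup G] [Fintype G]
    (b s n d M : ℕ) (hb : b = Fintype.card G) (hs : 0 < s) (hn : 0 < n)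
    (hd : 0 < d) (hM : 0 < M)
    (hvol : Nat.card {A : Fin s → Fin n → AddChar G ℂ // dickWeight A ≤ M - 1} ≤
      b.minFac ^ d) :
    ∃ P : AddSubgroup (Fin s → Fin n → G), Nat.card P ≤ b ^ d ∧
      ∀ A : Fin s → Fin n → AddChar G ℂ,
        (∀ B ∈ P, (∏ i : Fin s, ∏ j : Fin n, A i j (B i j)) = 1) →
        A ≠ (fun _ _ => 1) → M ≤ dickWeight A :=
  exists_subgroup_min_dick_weight_general G b s n d M hb hvol
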